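/- Let h ∈ (0,1) and λ ∈ (0,1). Then the function F_{1,λ} is twice continuously differentiable on ℝ with F_{1,λ}''(r) ≥ h for every r ∈ ℝ; in particular F_{1,λ} is convex on ℝ. -/

import Mathlib

/-- Convex singular part `F_{1,λ}` of the regularized Lennard--Jones potential. -/
noncomputable def F1reg (h l r : ℝ) : ℝ :=
  if r < 0 then -r^3/l + h/2 * r^2 + h*r
  else if r < 1 - l then -h * Real.log (1 - r)
  else -h * Real.log l + 3*h/2 - 2*h/l * (1 - r) + h/(2*l^2) * (1 - r)^2

/-- Non-convex regular part `F̄₂` of the regularized Lennard--Jones potential. -/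
noncomputable def F2reg (h r : ℝ) : ℝ :=
  if r < 1 then -r^3/3 - h*(r^2/2 + r)
  else -1/3 - 3*h/2 - (1 + 2*h)*(r - 1) - (2 + h)/2 * (r - 1)^2

/-- The regularized potential `F_λ = F_{1,λ} + F̄₂`. -/
noncomputable def Freg (h l r : ℝ) : ℝ := F1reg h l r + F2reg h r

/-!
On each of its three branches `F_{1,λ}` is smooth, with second derivative `h - 6r/λ`,
`h/(1-r)²` and `h/λ²` respectively, each at least `h`. The polynomial branches are chosen so
that values and first two derivatives agree at the junctions `r = 0` and `r = 1 - λ`, so the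
one-sided derivatives glue to global ones and `F_{1,λ}` is `C²`; convexity follows from
`F_{1,λ}'' ≥ h > 0`.
-/

open Set

theorem continuous_ite_lt {α β : Type*} [TopologicalSpace α] [LinearOrder α]
    [OrderClosedTopology α] [TopologicalSpace β] {f g : α → β} {a : α}
    (hf : ContinuousOn f (Iic a)) (hg : ContinuousOn g (Ici a)) (hfg : f a = g a) :
    Continuous fun x => if x < a then f x else g x := by
  refine continuous_if (fun x hx => ?_) (hf.mono ?_) (hg.mono ?_)
  · rw [show {x | x < a} = (Ici a)ᶜ by ext; simp, frontier_compl] at hx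
    rwa [frontier_Ici_subset a hx]
  · exact closure_minimal (fun _ => le_of_lt) isClosed_Iic
  · exact closure_minimal (fun _ => le_of_not_gt) isClosed_Ici

theorem hasDerivAt_ite_lt {E : Type*} [NormedAddCommGroup E] [NormedSpace ℝ E]
    {f g f' g' : ℝ → E} {a : ℝ} (hf : ∀ x ≤ a, HasDerivAt f (f' x) x)
    (hg : ∀ x ≥ a, HasDerivAt g (g' x) x) (hfg : f a = g a) (hfg' : f' a = g' a) (x : ℝ) :
    HasDerivAt (fun y => if y < a then f y else g y) (if x < a then f' x else g' x) x := by
  rcases lt_trichotomy x a with hx | rfl | hx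
  · rw [if_pos hx]
    exact (hf x hx.le).congr_of_eventuallyEq <| (eventually_lt_nhds hx).mono fun y hy => if_pos hy
  · rw [if_neg (lt_irrefl x)]
    have hleft : HasDerivWithinAt (fun y => if y < x then f y else g y) (g' x) (Iic x) x :=
      hfg' ▸ (hf x le_rfl).hasDerivWithinAt.congr
        (fun y hy => by rcases (mem_Iic.1 hy).lt_or_eq with hy | rfl <;> simp [*]) (by simp [hfg])
    have hright : HasDerivWithinAt (fun y => if y < x then f y else g y) (g' x) (Ici x) x :=
      (hg x le_rfl).hasDerivWithinAt.congr (fun y hy => if_neg (not_lt.2 hy))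
        (if_neg (lt_irrefl x))
    simpa using hleft.union hright
  · rw [if_neg hx.not_gt]
    exact (hg x hx.le).congr_of_eventuallyEq <|
      (eventually_gt_nhds hx).mono fun y hy => if_neg hy.not_gt

theorem contDiff_two_of_hasDerivAt {𝕜 F : Type*} [NontriviallyNormedField 𝕜]
    [NormedAddCommGroup F] [NormedSpace 𝕜 F] {f f' f'' : 𝕜 → F}
    (hf : ∀ x, HasDerivAt f (f' x) x) (hf' : ∀ x, HasDerivAt f' (f'' x) x)
    (hf'' : Continuous f'') : ContDiff 𝕜 2 f := by
  have hderiv : deriv f = f' := funext fun x => (hf x).deriv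
  have hderiv' : deriv f' = f'' := funext fun x => (hf' x).deriv
  rw [show (2 : WithTop ℕ∞) = 1 + 1 from rfl, contDiff_succ_iff_deriv, hderiv,
    contDiff_one_iff_deriv, hderiv']
  exact ⟨fun x => (hf x).differentiableAt, by simp, fun x => (hf' x).differentiableAt, hf''⟩

noncomputable def F1regDeriv (h l r : ℝ) : ℝ :=
  if r < 0 then -3 * r^2 / l + h * r + h
  else if r < 1 - l then h / (1 - r)
  else 2 * h / l - h / l^2 * (1 - r)

noncomputable def F1regDeriv2 (h l r : ℝ) : ℝ :=
  if r < 0 then -6 * r / l + h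
  else if r < 1 - l then h / (1 - r)^2
  else h / l^2

section

variable {h l : ℝ}

theorem hasDerivAt_F1reg (hl : l ∈ Ioo 0 1) (x : ℝ) :
    HasDerivAt (F1reg h l) (F1regDeriv h l x) x := by
  obtain ⟨hl₀, hl₁⟩ := hl
  have hl₀' : l ≠ 0 := hl₀.ne'
  have hcubic (x : ℝ) :
      HasDerivAt (fun r => -r^3/l + h/2 * r^2 + h*r) (-3 * x^2 / l + h * x + h) x :=
    ((((hasDerivAt_pow 3 x).neg.div_const l).add ((hasDerivAt_pow 2 x).const_mul (h/2))).add
      ((hasDerivAt_id' x).const_mul h)).congr_deriv (by simp; ring)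
  have hlog (x : ℝ) (hx : x ≤ 1 - l) :
      HasDerivAt (fun r => -h * Real.log (1 - r)) (h / (1 - x)) x :=
    ((((hasDerivAt_id' x).const_sub 1).log (by simp; linarith)).const_mul (-h)).congr_deriv
      (by simp; ring)
  have hquad (x : ℝ) : HasDerivAt
      (fun r => -h * Real.log l + 3*h/2 - 2*h/l * (1 - r) + h/(2*l^2) * (1 - r)^2)
      (2 * h / l - h / l^2 * (1 - x)) x :=
    ((((hasDerivAt_id' x).const_sub 1).const_mul (2*h/l)).const_sub (-h * Real.log l + 3*h/2)
      |>.add ((((hasDerivAt_id' x).const_sub 1).pow 2).const_mul (h/(2*l^2)))).congr_deriv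
      (by field_simp; ring)
  have hright (x : ℝ) (_ : x ≥ 0) := hasDerivAt_ite_lt hlog (fun x _ => hquad x)
    (by rw [sub_sub_cancel]; field_simp; ring) (by rw [sub_sub_cancel]; field_simp; ring) x
  exact hasDerivAt_ite_lt (fun x _ => hcubic x) hright (by simp [hl₁]) (by simp [hl₁]) x

theorem hasDerivAt_F1regDeriv (hl : l ∈ Ioo 0 1) (x : ℝ) :
    HasDerivAt (F1regDeriv h l) (F1regDeriv2 h l x) x := by
  obtain ⟨hl₀, hl₁⟩ := hl
  have hl₀' : l ≠ 0 := hl₀.ne'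
  have hquad (x : ℝ) : HasDerivAt (fun r => -3 * r^2 / l + h * r + h) (-6 * x / l + h) x :=
    (((((hasDerivAt_pow 2 x).const_mul (-3)).div_const l).add
      ((hasDerivAt_id' x).const_mul h)).add_const h).congr_deriv (by simp; ring)
  have hinv (x : ℝ) (hx : x ≤ 1 - l) : HasDerivAt (fun r => h / (1 - r)) (h / (1 - x)^2) x :=
    ((hasDerivAt_const x h).div ((hasDerivAt_id' x).const_sub 1) (by linarith)).congr_deriv
      (by simp)
  have hlin (x : ℝ) : HasDerivAt (fun r => 2 * h / l - h / l^2 * (1 - r)) (h / l^2) x :=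
    ((((hasDerivAt_id' x).const_sub 1).const_mul (h / l^2)).const_sub (2 * h / l)).congr_deriv
      (by simp)
  have hright (x : ℝ) (_ : x ≥ 0) := hasDerivAt_ite_lt hinv (fun x _ => hlin x)
    (by rw [sub_sub_cancel]; field_simp; ring) (by rw [sub_sub_cancel]) x
  exact hasDerivAt_ite_lt (fun x _ => hquad x) hright (by simp [hl₁]) (by simp [hl₁]) x

theorem continuous_F1regDeriv2 (hl : l ∈ Ioo 0 1) : Continuous (F1regDeriv2 h l) := by
  obtain ⟨hl₀, hl₁⟩ := hl
  have hinv : ContinuousOn (fun r => h / (1 - r)^2) (Iic (1 - l)) :=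
    continuousOn_const.div (by fun_prop) fun r hr => by simp at hr ⊢; nlinarith
  have hright : Continuous fun r => if r < 1 - l then h / (1 - r)^2 else h / l^2 :=
    continuous_ite_lt hinv continuousOn_const (by rw [sub_sub_cancel])
  exact continuous_ite_lt (by fun_prop) hright.continuousOn (by simp [hl₁])

theorem le_F1regDeriv2 (hh : 0 ≤ h) (hl₀ : 0 < l) (hl₁ : l ≤ 1) (r : ℝ) :
    h ≤ F1regDeriv2 h l r := by
  unfold F1regDeriv2
  split_ifs with hr₀ hr₁
  · have : 0 ≤ -6 * r / l := div_nonneg (by linarith) hl₀.le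
    linarith
  · exact le_div_self hh (by nlinarith) (by nlinarith)
  · exact le_div_self hh (by positivity) (by nlinarith)

end

/-- `F_{1,λ}` is twice continuously differentiable with `F_{1,λ}'' ≥ h` everywhere;
in particular it is convex on `ℝ`. -/
theorem F1reg_contDiff_convex (h l : ℝ)
    (hh : h ∈ Set.Ioo (0:ℝ) 1) (hl : l ∈ Set.Ioo (0:ℝ) 1) :
    ContDiff ℝ 2 (F1reg h l) ∧
    (∀ r : ℝ, h ≤ deriv (deriv (F1reg h l)) r) ∧
    ConvexOn ℝ Set.univ (F1reg h l) := by
  have hD1 : deriv (F1reg h l) = F1regDeriv h l := funext fun x => (hasDerivAt_F1reg hl x).deriv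
  have hD2 : deriv (deriv (F1reg h l)) = F1regDeriv2 h l :=
    hD1 ▸ funext fun x => (hasDerivAt_F1regDeriv hl x).deriv
  have hbound (r : ℝ) : h ≤ deriv (deriv (F1reg h l)) r :=
    hD2 ▸ le_F1regDeriv2 hh.1.le hl.1 hl.2.le r
  refine ⟨contDiff_two_of_hasDerivAt (hasDerivAt_F1reg hl) (hasDerivAt_F1regDeriv hl)
    (continuous_F1regDeriv2 hl), hbound, ?_⟩
  refine convexOn_univ_of_deriv2_nonneg (fun x => (hasDerivAt_F1reg hl x).differentiableAt)
    (hD1 ▸ fun x => (hasDerivAt_F1regDeriv hl x).differentiableAt) fun x => ?_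
  rw [Function.iterate_succ_apply', Function.iterate_one]
  exact hh.1.le.trans (hbound x)
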